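/- Assume the SBP setup and let a, b > 0. Let v : ℝ → ℝ^m be twice continuously differentiable and satisfy, for all t, b v″(t) = −a D₄ v(t) + a H⁻¹ d_{1;l} (d_{2;l}ᵀ v(t)) + a H⁻¹ e_l (d_{3;l}ᵀ v(t)) − a H⁻¹ d_{1;r} (d_{2;r}ᵀ v(t)) + a H⁻¹ e_r (d_{3;r}ᵀ v(t)). Then the energy E(t) = b ‖v′(t)‖²_H + a v(t)ᵀ N v(t) is non-negative and constant in t. (This is the energy stability of the SBP-SAT discretization of the dynamic beam equation with free boundary conditions, with penalty parameters τ = σ = 1.) -/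

import Mathlib

open Matrix

lemma vecMulVec_mulVec' {m : ℕ} (w u x : Fin m → ℝ) :
    vecMulVec w u *ᵥ x = (u ⬝ᵥ x) • w := by
  ext i
  simp [vecMulVec, mulVec, dotProduct, Finset.mul_sum, mul_assoc, mul_comm, mul_left_comm]

lemma hasDerivAt_dot {m : ℕ} (f g : ℝ → Fin m → ℝ) (f' g' : Fin m → ℝ) (t : ℝ)
    (hf : HasDerivAt f f' t) (hg : HasDerivAt g g' t) :
    HasDerivAt (fun s => f s ⬝ᵥ g s) (f' ⬝ᵥ g t + f t ⬝ᵥ g') t := by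
  have hfi := hasDerivAt_pi.1 hf
  have hgi := hasDerivAt_pi.1 hg
  have : HasDerivAt (fun s => ∑ i, f s i * g s i)
      (∑ i, (f' i * g t i + f t i * g' i)) t :=
    HasDerivAt.fun_sum fun i _ => (hfi i).mul (hgi i)
  simpa [dotProduct, Finset.sum_add_distrib] using this

lemma hasDerivAt_mulVec' {m : ℕ} (M : Matrix (Fin m) (Fin m) ℝ) (g : ℝ → Fin m → ℝ)
    (g' : Fin m → ℝ) (t : ℝ) (hg : HasDerivAt g g' t) :
    HasDerivAt (fun s => M *ᵥ g s) (M *ᵥ g') t := by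
  rw [hasDerivAt_pi]
  intro i
  have hgi := hasDerivAt_pi.1 hg
  have : HasDerivAt (fun s => ∑ j, M i j * g s j) (∑ j, M i j * g' j) t :=
    HasDerivAt.fun_sum fun j _ => (hgi j).const_mul _
  simpa [mulVec, dotProduct] using this

/-- Energy stability of the SBP-SAT discretization of the dynamic beam equation
with free boundary conditions (penalty parameters `τ = σ = 1`). -/
theorem sbp_sat_free_energy_stable
    (m : ℕ) (hm : 1 ≤ m)
    (H N : Matrix (Fin m) (Fin m) ℝ)
    (hHdiag : H.IsDiag) (hH : H.PosDef) (hN : N.PosSemidef)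
    (el er d1l d1r d2l d2r d3l d3r : Fin m → ℝ)
    (D4 : Matrix (Fin m) (Fin m) ℝ)
    (hD4 : D4 = H⁻¹ * (N + vecMulVec el d3l + vecMulVec d1l d2l
      + vecMulVec er d3r - vecMulVec d1r d2r))
    (a b : ℝ) (ha : 0 < a) (hb : 0 < b)
    (v : ℝ → Fin m → ℝ) (hv : ContDiff ℝ 2 v)
    (hode : ∀ t : ℝ,
      b • deriv (deriv v) t =
        -(a • (D4 *ᵥ v t))
        + (a * (d2l ⬝ᵥ v t)) • (H⁻¹ *ᵥ d1l)
        + (a * (d3l ⬝ᵥ v t)) • (H⁻¹ *ᵥ el)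
        - (a * (d2r ⬝ᵥ v t)) • (H⁻¹ *ᵥ d1r)
        + (a * (d3r ⬝ᵥ v t)) • (H⁻¹ *ᵥ er))
    (E : ℝ → ℝ)
    (hE : ∀ t : ℝ, E t =
      b * (deriv v t ⬝ᵥ (H *ᵥ deriv v t)) + a * (v t ⬝ᵥ (N *ᵥ v t))) :
    (∀ t : ℝ, 0 ≤ E t) ∧ (∀ t s : ℝ, E t = E s) := by
  have hdet : IsUnit H.det := (hH.det_pos.ne').isUnit
  have hHinv : H * H⁻¹ = 1 := Matrix.mul_nonsing_inv H hdet
  -- key: b • (H *ᵥ v'' t) = -(a • (N *ᵥ v t))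
  have hkey : ∀ t, b • (H *ᵥ deriv (deriv v) t) = -(a • (N *ᵥ v t)) := by
    intro t
    have h1 := congrArg (fun x => H *ᵥ x) (hode t)
    have hcanc : ∀ y : Fin m → ℝ, H *ᵥ (H⁻¹ *ᵥ y) = y := by
      intro y
      rw [Matrix.mulVec_mulVec, hHinv, Matrix.one_mulVec]
    have hHD4 : ∀ x : Fin m → ℝ, H *ᵥ (D4 *ᵥ x) =
        N *ᵥ x + (d3l ⬝ᵥ x) • el + (d2l ⬝ᵥ x) • d1l
          + (d3r ⬝ᵥ x) • er - (d2r ⬝ᵥ x) • d1r := by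
      intro x
      rw [hD4, Matrix.mulVec_mulVec, ← Matrix.mul_assoc, hHinv, Matrix.one_mul]
      simp [Matrix.add_mulVec, Matrix.sub_mulVec, vecMulVec_mulVec']
    simp only [Matrix.mulVec_smul, Matrix.mulVec_add, Matrix.mulVec_sub,
      Matrix.mulVec_neg, hcanc, hHD4] at h1
    rw [h1]
    simp only [smul_add, smul_sub, smul_smul, neg_add, neg_sub]
    module
  -- differentiability facts
  have h2 : ContDiff ℝ ((1 : ℕ) + 1) v := by
    exact_mod_cast hv
  rw [contDiff_succ_iff_deriv] at h2
  have hdv : ∀ t, HasDerivAt v (deriv v t) t := fun t =>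
    (h2.1 t).hasDerivAt
  have hddv : ∀ t, HasDerivAt (deriv v) (deriv (deriv v) t) t := fun t =>
    (h2.2.2.differentiable (by simp) t).hasDerivAt
  -- symmetry helpers
  have hHsym : Hᵀ = H := hH.isHermitian
  have hNsym : Nᵀ = N := hN.isHermitian
  have symdot : ∀ (A : Matrix (Fin m) (Fin m) ℝ), Aᵀ = A →
      ∀ x y : Fin m → ℝ, x ⬝ᵥ (A *ᵥ y) = y ⬝ᵥ (A *ᵥ x) := by
    intro A hA x y
    rw [Matrix.dotProduct_mulVec, ← Matrix.mulVec_transpose, hA, dotProduct_comm]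
  -- derivative of E is zero
  have hE' : ∀ t, HasDerivAt E 0 t := by
    intro t
    have hd1 : HasDerivAt (fun s => deriv v s ⬝ᵥ (H *ᵥ deriv v s))
        (deriv (deriv v) t ⬝ᵥ (H *ᵥ deriv v t)
          + deriv v t ⬝ᵥ (H *ᵥ deriv (deriv v) t)) t :=
      hasDerivAt_dot _ _ _ _ t (hddv t)
        (hasDerivAt_mulVec' H (deriv v) _ t (hddv t))
    have hd2 : HasDerivAt (fun s => v s ⬝ᵥ (N *ᵥ v s))
        (deriv v t ⬝ᵥ (N *ᵥ v t) + v t ⬝ᵥ (N *ᵥ deriv v t)) t :=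
      hasDerivAt_dot _ _ _ _ t (hdv t) (hasDerivAt_mulVec' N v _ t (hdv t))
    have : HasDerivAt (fun s => b * (deriv v s ⬝ᵥ (H *ᵥ deriv v s))
        + a * (v s ⬝ᵥ (N *ᵥ v s)))
        (b * (deriv (deriv v) t ⬝ᵥ (H *ᵥ deriv v t)
          + deriv v t ⬝ᵥ (H *ᵥ deriv (deriv v) t))
        + a * (deriv v t ⬝ᵥ (N *ᵥ v t) + v t ⬝ᵥ (N *ᵥ deriv v t))) t :=
      (hd1.const_mul b).add (hd2.const_mul a)
    have hEeq : E = fun s => b * (deriv v s ⬝ᵥ (H *ᵥ deriv v s))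
        + a * (v s ⬝ᵥ (N *ᵥ v s)) := funext hE
    rw [hEeq]
    convert this using 1
    have e1 : deriv (deriv v) t ⬝ᵥ (H *ᵥ deriv v t)
        = deriv v t ⬝ᵥ (H *ᵥ deriv (deriv v) t) := symdot H hHsym _ _
    have e2 : v t ⬝ᵥ (N *ᵥ deriv v t) = deriv v t ⬝ᵥ (N *ᵥ v t) := symdot N hNsym _ _
    have e3 : b * (deriv v t ⬝ᵥ (H *ᵥ deriv (deriv v) t))
        = deriv v t ⬝ᵥ (b • (H *ᵥ deriv (deriv v) t)) := by
      simp [dotProduct_smul]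
    have e4 : deriv v t ⬝ᵥ (b • (H *ᵥ deriv (deriv v) t))
        = -(a * (deriv v t ⬝ᵥ (N *ᵥ v t))) := by
      rw [hkey t]
      simp [dotProduct_smul]
    rw [e1, e2]
    have : b * (deriv v t ⬝ᵥ (H *ᵥ deriv (deriv v) t))
        = -(a * (deriv v t ⬝ᵥ (N *ᵥ v t))) := by rw [e3, e4]
    ring_nf
    linarith [this]
  constructor
  · intro t
    rw [hE t]
    have h1 : 0 ≤ deriv v t ⬝ᵥ (H *ᵥ deriv v t) := by
      have := hH.posSemidef.re_dotProduct_nonneg (deriv v t)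
      simpa using this
    have h2' : 0 ≤ v t ⬝ᵥ (N *ᵥ v t) := by
      have := hN.re_dotProduct_nonneg (v t)
      simpa using this
    positivity
  · intro t s
    exact is_const_of_deriv_eq_zero (fun x => (hE' x).differentiableAt)
      (fun x => (hE' x).deriv) t s
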